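/- Let G be a group, X a Hausdorff locally compact paracompact space and φ : G ↷ X a properly discontinuous and cocompact action by homeomorphisms. Then (X, ε_φ) is a proper and coarsely connected coarse space: for every (x, y) ∈ X × X there is e ∈ ε_φ with (x, y) ∈ e; ε_φ contains a neighbourhood of the diagonal ΔX in X × X; and every ε_φ-bounded subset of X is topologically bounded. -/
import Mathlib


namespace Paper

open Set Topology

/-! ### Coarse structures -/

/-- The inverse of a relation `e ⊆ X × X`. -/
def invRel {X : Type*} (e : Set (X × X)) : Set (X × X) := {p | (p.2, p.1) ∈ e}

/-- The composition of relations: `compRel e e' = {(a,b) | ∃ c, (a,c) ∈ e ∧ (c,b) ∈ e'}`.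
This is `e' ∘ e` in the paper's notation. -/
def compRel {X : Type*} (e e' : Set (X × X)) : Set (X × X) :=
  {p | ∃ c, (p.1, c) ∈ e ∧ (c, p.2) ∈ e'}

/-- A coarse structure on a set `X`. -/
def IsCoarseStructure {X : Type*} (ε : Set (Set (X × X))) : Prop :=
  Set.diagonal X ∈ ε ∧
  (∀ e ∈ ε, ∀ e' : Set (X × X), e' ⊆ e → e' ∈ ε) ∧
  (∀ e ∈ ε, ∀ e' ∈ ε, e ∪ e' ∈ ε) ∧
  (∀ e ∈ ε, invRel e ∈ ε) ∧
  (∀ e ∈ ε, ∀ e' ∈ ε, compRel e e' ∈ ε)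

/-- The coarse structure generated by a family `A` of subsets of `X × X`:
the intersection of all coarse structures containing `A`. -/
def genCoarse {X : Type*} (A : Set (Set (X × X))) : Set (Set (X × X)) :=
  ⋂₀ {ε | IsCoarseStructure ε ∧ A ⊆ ε}

/-- The `u`-neighbourhood `𝔅(B, u)` of a subset `B`. -/
def Bnh {X : Type*} (B : Set X) (u : Set (X × X)) : Set X := {x | ∃ y ∈ B, (x, y) ∈ u}

/-- A subset `B` is bounded for the coarse structure `ε` if `B × B ∈ ε`. -/
def CBounded {X : Type*} (ε : Set (Set (X × X))) (B : Set X) : Prop := B ×ˢ B ∈ ε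

/-- A map is bornologous if it sends entourages to entourages. -/
def Bornologous {X Y : Type*} (ε : Set (Set (X × X))) (ζ : Set (Set (Y × Y)))
    (f : X → Y) : Prop :=
  ∀ e ∈ ε, Prod.map f f '' e ∈ ζ

/-- A map is (coarsely) proper if preimages of bounded sets are bounded. -/
def CProper {X Y : Type*} (ε : Set (Set (X × X))) (ζ : Set (Set (Y × Y)))
    (f : X → Y) : Prop :=
  ∀ B : Set Y, CBounded ζ B → CBounded ε (f ⁻¹' B)

/-- A coarse map is a proper bornologous map. -/
def CoarseMap {X Y : Type*} (ε : Set (Set (X × X))) (ζ : Set (Set (Y × Y)))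
    (f : X → Y) : Prop :=
  Bornologous ε ζ f ∧ CProper ε ζ f

/-- Two maps `f g : S → X` are close if `{(f s, g s) | s ∈ S}` is an entourage. -/
def Close {S X : Type*} (ε : Set (Set (X × X))) (f g : S → X) : Prop :=
  Set.range (fun s => (f s, g s)) ∈ ε

/-- A coarse equivalence: a coarse map with a coarse quasi-inverse. -/
def CoarseEquiv {X Y : Type*} (ε : Set (Set (X × X))) (ζ : Set (Set (Y × Y)))
    (f : X → Y) : Prop :=
  CoarseMap ε ζ f ∧
    ∃ g : Y → X, CoarseMap ζ ε g ∧ Close ζ (f ∘ g) id ∧ Close ε (g ∘ f) id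

/-- The subspace coarse structure on `A ⊆ Y`. -/
def SubCoarse {Y : Type*} (ζ : Set (Set (Y × Y))) (A : Set Y) : Set (Set (↥A × ↥A)) :=
  {e | Prod.map (Subtype.val : A → Y) (Subtype.val : A → Y) '' e ∈ ζ}

/-- A coarse embedding: a coarse map which is a coarse equivalence onto its image with
the subspace coarse structure. -/
def CoarseEmbedding {X Y : Type*} (ε : Set (Set (X × X))) (ζ : Set (Set (Y × Y)))
    (f : X → Y) : Prop :=
  CoarseMap ε ζ f ∧ CoarseEquiv ε (SubCoarse ζ (Set.range f)) (Set.rangeFactorization f)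

/-- A coarse space is coarsely connected if every pair lies in some entourage. -/
def CoarselyConnected {X : Type*} (ε : Set (Set (X × X))) : Prop :=
  ∀ x y : X, ∃ e ∈ ε, (x, y) ∈ e

/-- `A` is quasi-dense if `𝔅(A, e) = X` for some entourage `e`. -/
def QuasiDense {X : Type*} (ε : Set (Set (X × X))) (A : Set X) : Prop :=
  ∃ e ∈ ε, Bnh A e = Set.univ

/-- A subset of a topological space is topologically bounded if its closure is compact. -/
def TopBounded {X : Type*} [TopologicalSpace X] (B : Set X) : Prop := IsCompact (closure B)

/-- A coarse structure on a topological space is proper if it contains a neighbourhood of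
the diagonal and every bounded set is topologically bounded. -/
def ProperCoarse {X : Type*} [TopologicalSpace X] (ε : Set (Set (X × X))) : Prop :=
  (∃ e ∈ ε, e ∈ nhdsSet (Set.diagonal X)) ∧ ∀ B : Set X, CBounded ε B → TopBounded B

/-! ### Artin–Wraith glueings -/

/-- An admissible map `f : Closed(X) → Closed(Y)`. -/
def Admissible {X Y : Type*} [TopologicalSpace X] [TopologicalSpace Y]
    (f : Set X → Set Y) : Prop :=
  (∀ A : Set X, IsClosed A → IsClosed (f A)) ∧
  (∀ A B : Set X, IsClosed A → IsClosed B → f (A ∪ B) = f A ∪ f B) ∧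
  f ∅ = ∅

/-- The closed sets of the Artin–Wraith glueing `X +_f Y`. -/
def AWClosed {X Y : Type*} [TopologicalSpace X] [TopologicalSpace Y]
    (f : Set X → Set Y) : Set (Set (X ⊕ Y)) :=
  {A | IsClosed (Sum.inl ⁻¹' A) ∧ IsClosed (Sum.inr ⁻¹' A) ∧
    Sum.inr '' f (Sum.inl ⁻¹' A) ⊆ A}

/-- The topology of the Artin–Wraith glueing `X +_f Y` on `X ⊕ Y`. (For admissible `f`,
the closed sets of this topology are exactly the members of `AWClosed f`.) -/
def AWTop {X Y : Type*} [TopologicalSpace X] [TopologicalSpace Y]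
    (f : Set X → Set Y) : TopologicalSpace (X ⊕ Y) :=
  TopologicalSpace.generateFrom (compl '' AWClosed f)

/-- `X +_f W` is a (Hausdorff) compactification of `X`: a compact Hausdorff Artin–Wraith
glueing in which `X` is dense. -/
def IsCompactification {X W : Type*} [TopologicalSpace X] [TopologicalSpace W]
    (f : Set X → Set W) : Prop :=
  Admissible f ∧
  @CompactSpace (X ⊕ W) (AWTop f) ∧
  @T2Space (X ⊕ W) (AWTop f) ∧
  @Dense (X ⊕ W) (AWTop f) (Set.range Sum.inl)

/-- A relation `e ⊆ X × X` is proper if `𝔅(B,e)` and `𝔅(B,e⁻¹)` are topologically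
bounded for every topologically bounded `B`. -/
def ProperRel {X : Type*} [TopologicalSpace X] (e : Set (X × X)) : Prop :=
  ∀ B : Set X, TopBounded B → TopBounded (Bnh B e) ∧ TopBounded (Bnh B (invRel e))

/-- `e` is a perspective subset of `X × X` with respect to the compactification `X +_f W`. -/
def PerspRel {X W : Type*} [TopologicalSpace X] [TopologicalSpace W]
    (f : Set X → Set W) (e : Set (X × X)) : Prop :=
  ProperRel e ∧
  ∀ y : W, ∀ V : Set (X ⊕ W), IsOpen[AWTop f] V → Sum.inr y ∈ V →
    ∃ U : Set (X ⊕ W), IsOpen[AWTop f] U ∧ Sum.inr y ∈ U ∧ U ⊆ V ∧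
      ∀ p ∈ e, Sum.inl p.1 ∈ U → Sum.inl p.2 ∈ V

/-- A perspective compactification of the coarse space `(X, ε)`. -/
def PerspCompactification {X W : Type*} [TopologicalSpace X] [TopologicalSpace W]
    (ε : Set (Set (X × X))) (f : Set X → Set W) : Prop :=
  IsCompactification f ∧ ∀ e ∈ ε, PerspRel f e

/-- The pullback of `f : Closed(X) → Closed(W)` with respect to `π : Y → X` and
`ϖ : Z → W`. -/
def pullbackAW {X Y Z W : Type*} [TopologicalSpace X] [TopologicalSpace Z]
    (f : Set X → Set W) (π : Y → X) (ϖ : Z → W) (A : Set Y) : Set Z :=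
  closure (ϖ ⁻¹' (f (closure (π '' A))))

/-! ### Group actions -/

/-- `φ : G → X → X` is an action by homeomorphisms. -/
def IsActionByHomeos {G X : Type*} [Group G] [TopologicalSpace X]
    (φ : G → X → X) : Prop :=
  (∀ g : G, Continuous (φ g)) ∧ (∀ x : X, φ 1 x = x) ∧
    ∀ g h : G, ∀ x : X, φ (g * h) x = φ g (φ h x)

/-- A properly discontinuous action. -/
def ProperlyDisc {G X : Type*} [TopologicalSpace X] (φ : G → X → X) : Prop :=
  ∀ K : Set X, IsCompact K → {g : G | (φ g '' K ∩ K).Nonempty}.Finite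

/-- A cocompact action. -/
def CocompactAct {G X : Type*} [TopologicalSpace X] (φ : G → X → X) : Prop :=
  ∃ K : Set X, IsCompact K ∧ (⋃ g : G, φ g '' K) = Set.univ

/-- The saturation `Sat(A) = {(φ(g,x), φ(g,x')) : g ∈ G, x, x' ∈ A}`. -/
def Sat {G X : Type*} (φ : G → X → X) (A : Set X) : Set (X × X) :=
  {p | ∃ g : G, ∃ x ∈ A, ∃ x' ∈ A, p = (φ g x, φ g x')}

/-- The coarse structure `ε_φ` on `X` generated by the saturations of topologically
bounded sets. -/
def coarseOfAction {G X : Type*} [TopologicalSpace X] (φ : G → X → X) :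
    Set (Set (X × X)) :=
  genCoarse {e | ∃ A : Set X, TopBounded A ∧ e = Sat φ A}

/-- The saturation for the left multiplication action of a group on itself. -/
def SatMul {G : Type*} [Group G] (U : Set G) : Set (G × G) :=
  {p | ∃ g : G, ∃ u ∈ U, ∃ u' ∈ U, p = (g * u, g * u')}

/-- The coarse structure `ε_G` on the group `G`, generated by the saturations of
finite subsets under the left multiplication action. -/
def coarseGroup (G : Type*) [Group G] : Set (Set (G × G)) :=
  genCoarse {e | ∃ U : Set G, U.Finite ∧ e = SatMul U}

/-- The compactification `X +_f W` is group-theoretically perspective with respect to the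
action `φ`. -/
def GTPerspective {G X W : Type*} [TopologicalSpace X] [TopologicalSpace W]
    (φ : G → X → X) (f : Set X → Set W) : Prop :=
  ∀ K : Set X, IsCompact K → ∀ y : W, ∀ U : Set (X ⊕ W),
    IsOpen[AWTop f] U → Sum.inr y ∈ U →
      ∃ V : Set (X ⊕ W), IsOpen[AWTop f] V ∧ Sum.inr y ∈ V ∧ V ⊆ U ∧
        ∀ g : G, (∃ x ∈ K, Sum.inl (φ g x) ∈ V) → ∀ x ∈ K, Sum.inl (φ g x) ∈ U

/-! ### Rays and accessibility -/

/-- A family `Ψ` of rays in `X` based at `p`: each member is a pair `(A, γ)` of a closed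
unbounded subset `A ⊆ [0,∞)` containing `0` and a map `γ : ℝ → X` (regarded on `A`) which
is injective on `A`, proper, and satisfies `γ 0 = p`. -/
def GoodRayFamily {X : Type*} [TopologicalSpace X] (p : X)
    (Ψ : Set (Set ℝ × (ℝ → X))) : Prop :=
  ∀ r ∈ Ψ, r.1 ⊆ Set.Ici (0 : ℝ) ∧ IsClosed r.1 ∧ ¬Bornology.IsBounded r.1 ∧
    (0 : ℝ) ∈ r.1 ∧ r.2 0 = p ∧ Set.InjOn r.2 r.1 ∧
    ∀ B : Set X, TopBounded B → Bornology.IsBounded (r.1 ∩ r.2 ⁻¹' B)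

/-- The compactification `X +_f W` is `Ψ`-accessible. -/
def AccessibleComp {X W : Type*} [TopologicalSpace X] [TopologicalSpace W]
    (f : Set X → Set W) (Ψ : Set (Set ℝ × (ℝ → X))) : Prop :=
  (∀ w : W, ∃ r ∈ Ψ, f (closure (r.2 '' r.1)) = {w}) ∧
  ∀ r ∈ Ψ, ∃ w : W, f (closure (r.2 '' r.1)) = {w}


section Aux7

variable {G X : Type*} [Group G] [TopologicalSpace X]

lemma satMono (φ : G → X → X) {A B : Set X} (h : A ⊆ B) : Sat φ A ⊆ Sat φ B := by
  rintro p ⟨g, x, hx, x', hx', rfl⟩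
  exact ⟨g, x, h hx, x', h hx', rfl⟩

lemma genMem {Y : Type*} {A : Set (Set (Y × Y))} {e : Set (Y × Y)} (he : e ∈ A) :
    e ∈ genCoarse A :=
  fun _ hε => hε.2 he

lemma topBounded_of_compactSuperset [T2Space X] {B K : Set X} (hK : IsCompact K)
    (h : B ⊆ K) : TopBounded B :=
  hK.of_isClosed_subset isClosed_closure (closure_minimal h hK.isClosed)

lemma act_inv_apply {φ : G → X → X} (hact : IsActionByHomeos φ) (g : G) (x : X) :
    φ g⁻¹ (φ g x) = x := by
  rw [← hact.2.2, inv_mul_cancel, hact.2.1]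

lemma act_image_eq_preimage {φ : G → X → X} (hact : IsActionByHomeos φ) (g : G)
    (U : Set X) : φ g '' U = φ g⁻¹ ⁻¹' U := by
  ext y
  constructor
  · rintro ⟨x, hx, rfl⟩
    simpa [act_inv_apply hact g x] using hx
  · intro hy
    refine ⟨φ g⁻¹ y, hy, ?_⟩
    have := act_inv_apply hact g⁻¹ y
    simpa using this

/-- The key structural lemma: subsets of `Sat φ A ∪ Δ` for `A` topologically bounded form
a coarse structure, provided the action is properly discontinuous. -/
lemma isCoarse_satFamily [T2Space X] {φ : G → X → X} (hact : IsActionByHomeos φ)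
    (hpd : ProperlyDisc φ) :
    IsCoarseStructure {e : Set (X × X) |
      ∃ A : Set X, TopBounded A ∧ e ⊆ Sat φ A ∪ Set.diagonal X} := by
  constructor
  · exact ⟨∅, by simp [TopBounded], fun p hp => Or.inr hp⟩
  refine ⟨fun e ⟨A, hA, he⟩ e' hsub => ⟨A, hA, hsub.trans he⟩, ?_, ?_, ?_⟩
  · -- unions
    rintro e ⟨A, hA, he⟩ e' ⟨A', hA', he'⟩
    refine ⟨A ∪ A', ?_, ?_⟩
    · simpa [TopBounded, closure_union] using hA.union hA'
    · rintro p (hp | hp)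
      · rcases he hp with h | h
        · exact Or.inl (satMono φ subset_union_left h)
        · exact Or.inr h
      · rcases he' hp with h | h
        · exact Or.inl (satMono φ subset_union_right h)
        · exact Or.inr h
  · -- inverses
    rintro e ⟨A, hA, he⟩
    refine ⟨A, hA, fun p hp => ?_⟩
    rcases he hp with h | h
    · obtain ⟨g, x, hx, x', hx', hpe⟩ := h
      exact Or.inl ⟨g, x', hx', x, hx, by
        have h1 : p.2 = φ g x := congrArg Prod.fst hpe
        have h2 : p.1 = φ g x' := congrArg Prod.snd hpe
        exact Prod.ext h2 h1⟩
    · exact Or.inr h.symm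
  · -- compositions
    rintro e ⟨A, hA, he⟩ e' ⟨A', hA', he'⟩
    set C := closure A ∪ closure A' with hCdef
    have hC : IsCompact C := hA.union hA'
    set S := {k : G | (φ k '' C ∩ C).Nonempty} with hSdef
    have hS : S.Finite := hpd C hC
    set D := C ∪ ⋃ k ∈ S, φ k '' C with hDdef
    have hDc : IsCompact D := by
      refine hC.union (hS.isCompact_biUnion fun k _ => ?_)
      exact hC.image (hact.1 k)
    have hAC : A ⊆ C := subset_union_left.trans' subset_closure
    have hA'C : A' ⊆ C := subset_union_right.trans' subset_closure
    have hCD : C ⊆ D := subset_union_left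
    refine ⟨D, topBounded_of_compactSuperset hDc (subset_refl D), ?_⟩
    rintro ⟨a, b⟩ ⟨c, hac, hcb⟩
    rcases he hac with h1 | h1
    · rcases he' hcb with h2 | h2
      · -- both in saturations
        obtain ⟨g, x, hx, x', hx', hpe1⟩ := h1
        obtain ⟨h, y, hy, y', hy', hpe2⟩ := h2
        have ha : a = φ g x := congrArg Prod.fst hpe1
        have hc1 : c = φ g x' := congrArg Prod.snd hpe1
        have hc2 : c = φ h y := congrArg Prod.fst hpe2
        have hb : b = φ h y' := congrArg Prod.snd hpe2
        have hk : φ (g⁻¹ * h) y = x' := by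
          rw [hact.2.2]
          rw [← hc2, hc1, act_inv_apply hact]
        have hkS : (g⁻¹ * h) ∈ S := by
          refine ⟨x', ⟨y, hA'C hy, hk⟩, hAC hx'⟩
        have hky' : φ (g⁻¹ * h) y' ∈ D := by
          refine Or.inr (mem_biUnion hkS ⟨y', hA'C hy', rfl⟩)
        refine Or.inl ⟨g, x, hCD (hAC hx), φ (g⁻¹ * h) y', hky', ?_⟩
        have : φ g (φ (g⁻¹ * h) y') = φ h y' := by
          rw [← hact.2.2, mul_inv_cancel_left]
        rw [ha, hb, this]
      · -- second is diagonal: c = b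
        have hcb2 : c = b := h2
        exact Or.inl (satMono φ (hAC.trans hCD) (hcb2 ▸ h1))
    · -- first is diagonal: a = c
      have hac2 : a = c := h1
      rcases he' hcb with h2 | h2
      · exact Or.inl (satMono φ (hA'C.trans hCD) (hac2.symm ▸ h2))
      · exact Or.inr (hac2.trans h2)

end Aux7

/-- for a properly discontinuous cocompact action on a Hausdorff locally
compact paracompact space, `(X, ε_φ)` is proper and coarsely connected. -/
theorem stmt7 {G X : Type*} [Group G] [TopologicalSpace X] [T2Space X]
    [LocallyCompactSpace X] [ParacompactSpace X]
    (φ : G → X → X) (hact : IsActionByHomeos φ) (hpd : ProperlyDisc φ)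
    (hcc : CocompactAct φ) :
    CoarselyConnected (coarseOfAction φ) ∧
    (∃ e ∈ coarseOfAction φ, e ∈ nhdsSet (Set.diagonal X)) ∧
    ∀ B : Set X, CBounded (coarseOfAction φ) B → TopBounded B := by
  refine ⟨?_, ?_, ?_⟩
  · -- coarsely connected
    intro x y
    refine ⟨Sat φ {x, y}, genMem ⟨{x, y}, ?_, rfl⟩, ?_⟩
    · exact topBounded_of_compactSuperset (Set.toFinite {x, y}).isCompact
        (subset_refl _)
    · exact ⟨1, x, by simp, y, by simp, by simp [hact.2.1]⟩
  · -- neighbourhood of the diagonal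
    obtain ⟨K, hK, hKcov⟩ := hcc
    obtain ⟨K', hK', hKK'⟩ := exists_compact_superset hK
    refine ⟨Sat φ K', genMem ⟨K', topBounded_of_compactSuperset hK' (subset_refl _), rfl⟩,
      ?_⟩
    rw [mem_nhdsSet_iff_exists]
    refine ⟨⋃ g : G, (φ g '' interior K') ×ˢ (φ g '' interior K'), ?_, ?_, ?_⟩
    · refine isOpen_iUnion fun g => IsOpen.prod ?_ ?_ <;>
        · rw [act_image_eq_preimage hact]
          exact isOpen_interior.preimage (hact.1 g⁻¹)
    · rintro ⟨x, x'⟩ hx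
      have hx' : x = x' := hx
      subst hx'
      have : x ∈ ⋃ g : G, φ g '' K := hKcov ▸ Set.mem_univ x
      obtain ⟨_, ⟨g, rfl⟩, k, hk, rfl⟩ := this
      exact Set.mem_iUnion.2 ⟨g, ⟨k, hKK' hk, rfl⟩, ⟨k, hKK' hk, rfl⟩⟩
    · rintro ⟨a, b⟩ hab
      obtain ⟨g, hg⟩ := Set.mem_iUnion.1 hab
      obtain ⟨x, hx, hxe⟩ := hg.1
      obtain ⟨x', hx', hxe'⟩ := hg.2
      exact ⟨g, x, interior_subset hx, x', interior_subset hx',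
        Prod.ext hxe.symm hxe'.symm⟩
  · -- bounded implies topologically bounded
    intro B hB
    have hmem : B ×ˢ B ∈ {e : Set (X × X) |
        ∃ A : Set X, TopBounded A ∧ e ⊆ Sat φ A ∪ Set.diagonal X} := by
      refine hB _ ⟨isCoarse_satFamily hact hpd, ?_⟩
      rintro e ⟨A, hA, rfl⟩
      exact ⟨A, hA, Set.subset_union_left⟩
    obtain ⟨A, hA, hsub⟩ := hmem
    rcases Set.eq_empty_or_nonempty B with rfl | ⟨b₀, hb₀⟩
    · simpa [TopBounded] using isCompact_empty
    have hK : IsCompact (closure A ∪ {b₀}) := hA.union isCompact_singleton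
    have hS : {g : G | (φ g '' (closure A ∪ {b₀}) ∩ (closure A ∪ {b₀})).Nonempty}.Finite :=
      hpd _ hK
    refine topBounded_of_compactSuperset
      (hK.union (hS.isCompact_biUnion fun g _ => hK.image (hact.1 g))) ?_
    intro b hb
    have : (b, b₀) ∈ Sat φ A ∪ Set.diagonal X := hsub ⟨hb, hb₀⟩
    rcases this with h | h
    · obtain ⟨g, x, hx, x', hx', hpe⟩ := h
      have hb' : b = φ g x := congrArg Prod.fst hpe
      have hb0 : b₀ = φ g x' := congrArg Prod.snd hpe
      have hgS : g ∈ {g : G | (φ g '' (closure A ∪ {b₀}) ∩ (closure A ∪ {b₀})).Nonempty} :=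
        ⟨b₀, ⟨x', Or.inl (subset_closure hx'), hb0.symm⟩, Or.inr rfl⟩
      exact Or.inr (mem_biUnion hgS ⟨x, Or.inl (subset_closure hx), hb'.symm⟩)
    · have : b = b₀ := h
      exact Or.inl (Or.inr (by simp [this]))

end Paper
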